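/- Let Z₁ and Z₂ be 𝒢-complexes over 𝔽 = ℤ/2ℤ with fundamental classes f₁ of degree t₁ and f₂ of degree t₂, and let D₁, D₂ ≥ 0 be integers. Suppose that for ℓ = 1, 2 there are elements x^ℓ_i ∈ (Z_ℓ)_i for i = t_ℓ+1, t_ℓ+3, …, t_ℓ+2D_ℓ−1 satisfying ∂x^ℓ_{t_ℓ+1} = f_ℓ and ∂x^ℓ_i = s(1+j²)x^ℓ_{i−2} for t_ℓ+3 ≤ i ≤ t_ℓ+2D_ℓ−1. Then, setting t = t₁+t₂, there exist elements χ_i ∈ (Z₁ ⊗_𝔽 Z₂)_i for i = t+1, t+3, …, t+2(D₁+D₂)−1 satisfying ∂χ_{t+1} = f₁ ⊗ f₂ and ∂χ_i = s(1+j²)χ_{i−2} for t+3 ≤ i ≤ t+2(D₁+D₂)−1. -/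

import Mathlib

open scoped TensorProduct

/-- A `𝒢`-complex over `𝔽 = ℤ/2ℤ`: a `ℤ`-graded `𝔽`-vector space `M = ⊕ᵢ Mᵢ` with
`𝔽`-linear maps `∂` (degree `-1`), `j` (degree `0`), `s` (degree `+1`) satisfying
`∂² = 0`, `j⁴ = id`, `s² = 0`, `s∘j = j³∘s`, `∂∘j = j∘∂` and `∂(sz) = s(∂z) + (1+j²)z`. -/
structure GComplexOn (M : Type*) [AddCommGroup M] [Module (ZMod 2) M] where
  grading : ℤ → Submodule (ZMod 2) M
  isInternal : DirectSum.IsInternal grading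
  d : M →ₗ[ZMod 2] M
  j : M →ₗ[ZMod 2] M
  s : M →ₗ[ZMod 2] M
  d_mem : ∀ (i : ℤ), ∀ x ∈ grading i, d x ∈ grading (i - 1)
  j_mem : ∀ (i : ℤ), ∀ x ∈ grading i, j x ∈ grading i
  s_mem : ∀ (i : ℤ), ∀ x ∈ grading i, s x ∈ grading (i + 1)
  d_sq : ∀ x, d (d x) = 0
  j_four : ∀ x, j (j (j (j x))) = x
  s_sq : ∀ x, s (s x) = 0
  s_j : ∀ x, s (j x) = j (j (j (s x)))
  d_j : ∀ x, d (j x) = j (d x)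
  d_s : ∀ x, d (s x) = s (d x) + x + j (j x)

/-- A fundamental class of degree `t`: a nonzero cycle in degree `t`, fixed by `j` and
killed by `s`. -/
def IsFundClass {M : Type*} [AddCommGroup M] [Module (ZMod 2) M]
    (Z : GComplexOn M) (t : ℤ) (f : M) : Prop :=
  f ≠ 0 ∧ f ∈ Z.grading t ∧ Z.d f = 0 ∧ Z.j f = f ∧ Z.s f = 0

/-- The `n`-th graded piece `(Z₁ ⊗ Z₂)ₙ = ⊕_{i+k=n} (Z₁)ᵢ ⊗ (Z₂)_k` of the tensor
product of graded modules. -/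
noncomputable def tensorGrading {M₁ M₂ : Type*} [AddCommGroup M₁] [Module (ZMod 2) M₁]
    [AddCommGroup M₂] [Module (ZMod 2) M₂]
    (g₁ : ℤ → Submodule (ZMod 2) M₁) (g₂ : ℤ → Submodule (ZMod 2) M₂) (n : ℤ) :
    Submodule (ZMod 2) (M₁ ⊗[ZMod 2] M₂) :=
  ⨆ i : ℤ, Submodule.span (ZMod 2)
    {z | ∃ a ∈ g₁ i, ∃ b ∈ g₂ (n - i), z = a ⊗ₜ[ZMod 2] b}

/-- The differential `∂(a⊗b) = ∂a⊗b + a⊗∂b` on the tensor product. -/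
noncomputable def tensorD {M₁ M₂ : Type*} [AddCommGroup M₁] [Module (ZMod 2) M₁]
    [AddCommGroup M₂] [Module (ZMod 2) M₂]
    (d₁ : M₁ →ₗ[ZMod 2] M₁) (d₂ : M₂ →ₗ[ZMod 2] M₂) :
    M₁ ⊗[ZMod 2] M₂ →ₗ[ZMod 2] M₁ ⊗[ZMod 2] M₂ :=
  TensorProduct.map d₁ LinearMap.id + TensorProduct.map LinearMap.id d₂

/-- The map `j(a⊗b) = ja ⊗ jb` on the tensor product. -/
noncomputable def tensorJ {M₁ M₂ : Type*} [AddCommGroup M₁] [Module (ZMod 2) M₁]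
    [AddCommGroup M₂] [Module (ZMod 2) M₂]
    (j₁ : M₁ →ₗ[ZMod 2] M₁) (j₂ : M₂ →ₗ[ZMod 2] M₂) :
    M₁ ⊗[ZMod 2] M₂ →ₗ[ZMod 2] M₁ ⊗[ZMod 2] M₂ :=
  TensorProduct.map j₁ j₂

/-- The map `s(a⊗b) = sa ⊗ b + j²a ⊗ sb` on the tensor product. -/
noncomputable def tensorS {M₁ M₂ : Type*} [AddCommGroup M₁] [Module (ZMod 2) M₁]
    [AddCommGroup M₂] [Module (ZMod 2) M₂]
    (j₁ s₁ : M₁ →ₗ[ZMod 2] M₁) (s₂ : M₂ →ₗ[ZMod 2] M₂) :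
    M₁ ⊗[ZMod 2] M₂ →ₗ[ZMod 2] M₁ ⊗[ZMod 2] M₂ :=
  TensorProduct.map s₁ LinearMap.id + TensorProduct.map (j₁ ∘ₗ j₁) s₂

/-- A tower of the kind computing the invariant `d` of a suspensionlike complex
(equation (3.7) of the paper): elements `x i ∈ g i` for `i = t+1, t+3, …, t+2D-1` with
`∂ x_{t+1} = f` and `∂ x_i = s(1+j²) x_{i-2}` for `t+3 ≤ i ≤ t+2D-1`. -/
def TowerD {M : Type*} [AddCommGroup M] [Module (ZMod 2) M]
    (g : ℤ → Submodule (ZMod 2) M) (d j s : M →ₗ[ZMod 2] M)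
    (f : M) (t : ℤ) (D : ℕ) (x : ℤ → M) : Prop :=
  (∀ i : ℤ, t + 1 ≤ i → i ≤ t + 2*(D : ℤ) - 1 → i % 2 = (t + 1) % 2 → x i ∈ g i) ∧
  (1 ≤ D → d (x (t + 1)) = f) ∧
  (∀ i : ℤ, t + 3 ≤ i → i ≤ t + 2*(D : ℤ) - 1 → i % 2 = (t + 1) % 2 →
    d (x i) = s (x (i - 2)) + s (j (j (x (i - 2)))))

/-!
The tower over `f₁ ⊗ f₂` is the tower `x¹ᵢ ⊗ f₂` of height `D₁`, followed by the tower
`z ⊗ x²ᵢ` of height `D₂`, where `z = s(1+j²)x¹_{t₁+2D₁-1}` (or `z = f₁` if `D₁ = 0`) is the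
element the next step of the first tower would have to bound. Since `z` is a cycle killed by `s`
and fixed by `j²`, both `z ⊗ -` and `- ⊗ f₂` carry towers to towers, and `∂(z ⊗ x²_{t₂+1}) = z ⊗ f₂`
is exactly the boundary required to pass from the first tower to the second.
-/

section Tower

variable {M : Type*} [AddCommGroup M] [Module (ZMod 2) M]

/-- A fundamental class with `j f = f` weakened to `j² f = f`, and without `f ≠ 0`. -/
structure IsWeakFundClass (g : ℤ → Submodule (ZMod 2) M) (d j s : M →ₗ[ZMod 2] M)
    (t : ℤ) (c : M) : Prop where
  mem : c ∈ g t
  d_eq_zero : d c = 0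
  s_eq_zero : s c = 0
  j_j : j (j c) = c

theorem IsFundClass.isWeakFundClass {Z : GComplexOn M} {t : ℤ} {f : M}
    (hf : IsFundClass Z t f) : IsWeakFundClass Z.grading Z.d Z.j Z.s t f :=
  ⟨hf.2.1, hf.2.2.1, hf.2.2.2.2, by rw [hf.2.2.2.1, hf.2.2.2.1]⟩

/-- What `∂` of the next element of a tower of height `D` over `f` has to be. -/
def towerNextBoundary (j s : M →ₗ[ZMod 2] M) (f : M) (t : ℤ) (D : ℕ) (x : ℤ → M) : M :=
  if D = 0 then f else s (x (t + 2 * D - 1)) + s (j (j (x (t + 2 * D - 1))))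

theorem TowerD.append {g : ℤ → Submodule (ZMod 2) M} {d j s : M →ₗ[ZMod 2] M} {f : M} {t : ℤ}
    {D₁ D₂ : ℕ} {x y : ℤ → M} (hx : TowerD g d j s f t D₁ x)
    (hy : TowerD g d j s (towerNextBoundary j s f t D₁ x) (t + 2 * D₁) D₂ y) :
    TowerD g d j s f t (D₁ + D₂) (fun i => if i < t + 2 * D₁ then x i else y i) := by
  obtain ⟨hx_mem, hx_bot, hx_step⟩ := hx
  obtain ⟨hy_mem, hy_bot, hy_step⟩ := hy
  refine ⟨fun i hi₁ hi₂ hi => ?_, fun hD => ?_, fun i hi₁ hi₂ hi => ?_⟩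
  · dsimp only
    split_ifs with h
    · exact hx_mem i hi₁ (by omega) hi
    · exact hy_mem i (by omega) (by omega) (by omega)
  · rcases Nat.eq_zero_or_pos D₁ with rfl | hD₁
    · simpa [towerNextBoundary] using hy_bot (by omega)
    · simpa [show t + 1 < t + 2 * D₁ by omega] using hx_bot hD₁
  · by_cases h₁ : i < t + 2 * D₁
    · simpa [h₁, show i - 2 < t + 2 * D₁ by omega] using hx_step i hi₁ (by omega) hi
    by_cases h₂ : i - 2 < t + 2 * D₁
    · obtain rfl : i = t + 2 * D₁ + 1 := by omega
      have hD₁ : D₁ ≠ 0 := by omega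
      simpa [h₂, towerNextBoundary, hD₁, show t + 2 * D₁ + 1 - 2 = t + 2 * D₁ - 1 by ring]
        using hy_bot (by omega)
    · simpa [h₁, h₂] using hy_step i (by omega) (by omega) (by omega)

end Tower

namespace GComplexOn

variable {M : Type*} [AddCommGroup M] [Module (ZMod 2) M] (Z : GComplexOn M)

theorem s_j_j (u : M) : Z.s (Z.j (Z.j u)) = Z.j (Z.j (Z.s u)) := by
  rw [Z.s_j, Z.s_j, Z.j_four]

theorem j_j_add_j_j (u : M) : Z.j (Z.j (u + Z.j (Z.j u))) = u + Z.j (Z.j u) := by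
  rw [map_add, map_add, Z.j_four, add_comm]

theorem isWeakFundClass_s_add_j_j {n : ℤ} {u : M} (hu : u ∈ Z.grading n)
    (hsdu : Z.s (Z.d u) = 0) :
    IsWeakFundClass Z.grading Z.d Z.j Z.s (n + 1) (Z.s (u + Z.j (Z.j u))) where
  mem := Z.s_mem n _ (add_mem hu (Z.j_mem n _ (Z.j_mem n _ hu)))
  d_eq_zero := by
    have hsdw : Z.s (Z.d (u + Z.j (Z.j u))) = 0 := by
      rw [map_add, Z.d_j, Z.d_j, map_add, Z.s_j_j, hsdu, map_zero, map_zero, add_zero]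
    rw [Z.d_s, hsdw, Z.j_j_add_j_j, zero_add, ZModModule.add_self]
  s_eq_zero := Z.s_sq _
  j_j := by rw [← Z.s_j_j, Z.j_j_add_j_j]

theorem isWeakFundClass_towerNextBoundary {f : M} {t : ℤ} {D : ℕ} {x : ℤ → M}
    (hx : TowerD Z.grading Z.d Z.j Z.s f t D x)
    (hf : IsWeakFundClass Z.grading Z.d Z.j Z.s t f) :
    IsWeakFundClass Z.grading Z.d Z.j Z.s (t + 2 * D) (towerNextBoundary Z.j Z.s f t D x) := by
  obtain ⟨hx_mem, hx_bot, hx_step⟩ := hx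
  rcases Nat.eq_zero_or_pos D with rfl | hD
  · simpa [towerNextBoundary] using hf
  have hsd_top : Z.s (Z.d (x (t + 2 * D - 1))) = 0 := by
    obtain rfl | hD₂ : D = 1 ∨ 1 < D := by omega
    · rw [show t + 2 * ((1 : ℕ) : ℤ) - 1 = t + 1 by push_cast; ring, hx_bot le_rfl, hf.s_eq_zero]
    · rw [hx_step _ (by omega) le_rfl (by omega), map_add, Z.s_sq, Z.s_sq, add_zero]
  have h_next := Z.isWeakFundClass_s_add_j_j (hx_mem _ (by omega) le_rfl (by omega)) hsd_top
  rw [sub_add_cancel] at h_next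
  simpa [towerNextBoundary, hD.ne'] using h_next

end GComplexOn

section Tensor

variable {M₁ M₂ : Type*} [AddCommGroup M₁] [Module (ZMod 2) M₁]
  [AddCommGroup M₂] [Module (ZMod 2) M₂]

theorem tmul_mem_tensorGrading {g₁ : ℤ → Submodule (ZMod 2) M₁}
    {g₂ : ℤ → Submodule (ZMod 2) M₂} {a : M₁} {b : M₂} {i k : ℤ}
    (ha : a ∈ g₁ i) (hb : b ∈ g₂ k) : a ⊗ₜ[ZMod 2] b ∈ tensorGrading g₁ g₂ (i + k) :=
  Submodule.mem_iSup_of_mem i <| Submodule.subset_span ⟨a, ha, b, by rwa [add_sub_cancel_left], rfl⟩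

variable (d₁ j₁ s₁ : M₁ →ₗ[ZMod 2] M₁) (d₂ j₂ s₂ : M₂ →ₗ[ZMod 2] M₂) (a : M₁) (b : M₂)

@[simp]
theorem tensorD_tmul : tensorD d₁ d₂ (a ⊗ₜ b) = d₁ a ⊗ₜ b + a ⊗ₜ d₂ b := by
  simp [tensorD]

@[simp]
theorem tensorJ_tmul : tensorJ j₁ j₂ (a ⊗ₜ b) = j₁ a ⊗ₜ j₂ b := rfl

@[simp]
theorem tensorS_tmul : tensorS j₁ s₁ s₂ (a ⊗ₜ b) = s₁ a ⊗ₜ b + j₁ (j₁ a) ⊗ₜ s₂ b := by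
  simp [tensorS]

variable {d₁ j₁ s₁ d₂ j₂ s₂}

theorem TowerD.tmul_right {g₁ : ℤ → Submodule (ZMod 2) M₁} {g₂ : ℤ → Submodule (ZMod 2) M₂}
    {f : M₁} {c : M₂} {t t' : ℤ} {D : ℕ} {x : ℤ → M₁}
    (hx : TowerD g₁ d₁ j₁ s₁ f t D x) (hc : IsWeakFundClass g₂ d₂ j₂ s₂ t' c) :
    TowerD (tensorGrading g₁ g₂) (tensorD d₁ d₂) (tensorJ j₁ j₂) (tensorS j₁ s₁ s₂)
      (f ⊗ₜ c) (t + t') D (fun i => x (i - t') ⊗ₜ c) := by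
  obtain ⟨hx_mem, hx_bot, hx_step⟩ := hx
  refine ⟨fun i hi₁ hi₂ hi => ?_, fun hD => ?_, fun i hi₁ hi₂ hi => ?_⟩
  · simpa using tmul_mem_tensorGrading (hx_mem (i - t') (by omega) (by omega) (by omega)) hc.mem
  · simp [show t + t' + 1 - t' = t + 1 by ring, hx_bot hD, hc.d_eq_zero]
  · simp [hx_step (i - t') (by omega) (by omega) (by omega), hc.d_eq_zero, hc.s_eq_zero,
      hc.j_j, sub_right_comm i 2 t', TensorProduct.add_tmul]

theorem TowerD.tmul_left {g₁ : ℤ → Submodule (ZMod 2) M₁} {g₂ : ℤ → Submodule (ZMod 2) M₂}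
    {c : M₁} {f : M₂} {t t' : ℤ} {D : ℕ} {y : ℤ → M₂}
    (hc : IsWeakFundClass g₁ d₁ j₁ s₁ t' c) (hy : TowerD g₂ d₂ j₂ s₂ f t D y) :
    TowerD (tensorGrading g₁ g₂) (tensorD d₁ d₂) (tensorJ j₁ j₂) (tensorS j₁ s₁ s₂)
      (c ⊗ₜ f) (t' + t) D (fun i => c ⊗ₜ y (i - t')) := by
  obtain ⟨hy_mem, hy_bot, hy_step⟩ := hy
  refine ⟨fun i hi₁ hi₂ hi => ?_, fun hD => ?_, fun i hi₁ hi₂ hi => ?_⟩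
  · simpa using tmul_mem_tensorGrading hc.mem (hy_mem (i - t') (by omega) (by omega) (by omega))
  · simp [show t' + t + 1 - t' = t + 1 by ring, hy_bot hD, hc.d_eq_zero]
  · simp [hy_step (i - t') (by omega) (by omega) (by omega), hc.d_eq_zero, hc.s_eq_zero,
      hc.j_j, sub_right_comm i 2 t', TensorProduct.tmul_add]

theorem towerNextBoundary_tmul_right {c : M₂} (hc_s : s₂ c = 0) (hc_j : j₂ (j₂ c) = c)
    (f : M₁) (t t' : ℤ) (D : ℕ) (x : ℤ → M₁) :
    towerNextBoundary (tensorJ j₁ j₂) (tensorS j₁ s₁ s₂) (f ⊗ₜ c) (t + t') D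
      (fun i => x (i - t') ⊗ₜ c) = towerNextBoundary j₁ s₁ f t D x ⊗ₜ c := by
  unfold towerNextBoundary
  split_ifs
  · rfl
  · simp [hc_s, hc_j, TensorProduct.add_tmul, show t + t' + 2 * D - 1 - t' = t + 2 * D - 1 by ring]

end Tensor

/-- given `d`-type towers of heights `D₁, D₂` over fundamental classes
`f₁, f₂` in 𝒢-complexes `Z₁, Z₂`, there is a `d`-type tower of height `D₁+D₂` over
`f₁ ⊗ f₂` in `Z₁ ⊗_𝔽 Z₂`. -/
theorem stmt_14 {M₁ M₂ : Type*} [AddCommGroup M₁] [Module (ZMod 2) M₁]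
    [AddCommGroup M₂] [Module (ZMod 2) M₂]
    (Z₁ : GComplexOn M₁) (Z₂ : GComplexOn M₂) (t₁ t₂ : ℤ) (D₁ D₂ : ℕ)
    (f₁ : M₁) (f₂ : M₂) (hf₁ : IsFundClass Z₁ t₁ f₁) (hf₂ : IsFundClass Z₂ t₂ f₂)
    (x₁ : ℤ → M₁) (x₂ : ℤ → M₂)
    (hx₁ : TowerD Z₁.grading Z₁.d Z₁.j Z₁.s f₁ t₁ D₁ x₁)
    (hx₂ : TowerD Z₂.grading Z₂.d Z₂.j Z₂.s f₂ t₂ D₂ x₂) :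
    ∃ χ : ℤ → M₁ ⊗[ZMod 2] M₂,
      TowerD (tensorGrading Z₁.grading Z₂.grading) (tensorD Z₁.d Z₂.d)
        (tensorJ Z₁.j Z₂.j) (tensorS Z₁.j Z₁.s Z₂.s)
        (f₁ ⊗ₜ[ZMod 2] f₂) (t₁ + t₂) (D₁ + D₂) χ := by
  have hc₂ := hf₂.isWeakFundClass
  have hz := Z₁.isWeakFundClass_towerNextBoundary hx₁ hf₁.isWeakFundClass
  have h_first := TowerD.tmul_right hx₁ hc₂
  have h_second := TowerD.tmul_left hz hx₂
  rw [← towerNextBoundary_tmul_right hc₂.s_eq_zero hc₂.j_j f₁ t₁ t₂ D₁ x₁,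
    show t₁ + 2 * (D₁ : ℤ) + t₂ = t₁ + t₂ + 2 * D₁ by ring] at h_second
  exact ⟨_, h_first.append h_second⟩
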